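/- arXiv:1704.03929 — 2 statements merged into one kernel-verified Lean document; each statement's English description precedes it below -/
import Mathlib

section
/- Let F = ⟨α, β⟩ be free of rank 2, H = ker(F → ℤ/2ℤ, α ↦ 1, β ↦ 0), and let φ : H → F be the homomorphism determined by φ(α²) = 1, φ(β) = α, φ(α⁻¹βα) = β (using that α², β, α⁻¹βα freely generate H). Define φ̄ : F → F by φ̄(h) = φ(h) if h ∈ H, and φ̄(h) = α·φ(hα⁻¹) otherwise. Then for every integer n, the element αβⁿ is a fixed point of φ̄: φ̄(αβⁿ) = αβⁿ. -/
/- The free group `F` on two generators `a` (= α) and `b` (= β), the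
homomorphism `χ : F → ℤ/2` with `χ(a) = 1`, `χ(b) = 0`, and its kernel `H`. -/

/-- The generator `a` (= α) of the free group on two generators. -/
def genA : FreeGroup Bool := FreeGroup.of true

/-- The generator `b` (= β) of the free group on two generators. -/
def genB : FreeGroup Bool := FreeGroup.of false

/-- The homomorphism `χ : F → ℤ/2ℤ` with `χ(a) = 1` and `χ(b) = 0`. -/
def chi : FreeGroup Bool →* Multiplicative (ZMod 2) :=
  FreeGroup.lift fun x => Multiplicative.ofAdd (if x then 1 else 0)

/-- `H` is the kernel of `χ`. -/
def Hker : Subgroup (FreeGroup Bool) := chi.ker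

/-- Let `φ : H → F` be the homomorphism with `φ(α²) = 1`, `φ(β) = α`,
`φ(α⁻¹βα) = β`, and `φ̄ : F → F` the extension with `φ̄(h) = φ(h)` for `h ∈ H`
and `φ̄(h) = α·φ(hα⁻¹)` otherwise.  Then every `αβⁿ` (n ∈ ℤ) is a fixed point
of `φ̄`. -/
theorem alpha_beta_pow_fixed (φ : Hker →* FreeGroup Bool) (phibar : FreeGroup Bool → FreeGroup Bool)
    (hmA : genA ^ 2 ∈ Hker) (hmB : genB ∈ Hker) (hmC : genA⁻¹ * genB * genA ∈ Hker)
    (hφA : φ ⟨genA ^ 2, hmA⟩ = 1) (hφB : φ ⟨genB, hmB⟩ = genA)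
    (hφC : φ ⟨genA⁻¹ * genB * genA, hmC⟩ = genB)
    (hin : ∀ h (hh : h ∈ Hker), phibar h = φ ⟨h, hh⟩)
    (hout : ∀ h, h ∉ Hker → ∀ hm : h * genA⁻¹ ∈ Hker, phibar h = genA * φ ⟨h * genA⁻¹, hm⟩)
    (n : ℤ) :
    phibar (genA * genB ^ n) = genA * genB ^ n := by
  have hA : chi genA = Multiplicative.ofAdd (1 : ZMod 2) := by
    simp [chi, genA]
  have hB : chi genB = 1 := by
    simp [chi, genB]
  have hnot : genA * genB ^ n ∉ Hker := by
    simp only [Hker, MonoidHom.mem_ker, map_mul, map_zpow, hA, hB, one_zpow, mul_one]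
    decide
  have hm : (genA * genB ^ n) * genA⁻¹ ∈ Hker := by
    simp only [Hker, MonoidHom.mem_ker, map_mul, map_zpow, map_inv, hA, hB, one_zpow, mul_one]
    decide
  rw [hout _ hnot hm]
  have key : (⟨(genA * genB ^ n) * genA⁻¹, hm⟩ : Hker)
      = (⟨genA ^ 2, hmA⟩ * ⟨genA⁻¹ * genB * genA, hmC⟩ * (⟨genA ^ 2, hmA⟩ : Hker)⁻¹) ^ n := by
    ext
    push_cast
    group
    simp only [zpow_neg_one, conj_zpow]
  rw [key]
  rw [map_zpow, map_mul, map_mul, map_inv, hφA, hφC]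
  group
end

section
/- With F = ⟨α, β⟩ free, H = ker(F → ℤ/2ℤ, α ↦ 1, β ↦ 0), φ : H → F the homomorphism with φ(α²) = 1, φ(β) = α, φ(α⁻¹βα) = β, and φ̄ the extension defined by φ̄(h) = φ(h) for h ∈ H and φ̄(h) = α·φ(hα⁻¹) otherwise: for every integer n one has φ̄(βⁿ) = αⁿ, φ̄(α^{2n}) = 1, and φ̄(α^{2n+1}) = α; consequently the third iterate φ̄∘φ̄∘φ̄(βⁿ) lies in {1, α}, and both 1 and α are fixed points of φ̄. -/
lemma chiA : chi genA = Multiplicative.ofAdd 1 := by simp [chi, genA]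
lemma chiB : chi genB = 1 := by simp [chi, genB]
lemma memB : ∀ n : ℤ, genB ^ n ∈ Hker := by
  intro n; simp [Hker, MonoidHom.mem_ker, chiB]
lemma memA2 : ∀ n : ℤ, genA ^ (2 * n) ∈ Hker := by
  intro n
  have hsq : ∀ x : Multiplicative (ZMod 2), x ^ 2 = 1 := by decide
  have : chi (genA ^ (2*n)) = 1 := by
    rw [mul_comm, zpow_mul, zpow_ofNat, map_pow, hsq]
  simpa [Hker, MonoidHom.mem_ker] using this
lemma notmemA21 : ∀ n : ℤ, genA ^ (2 * n + 1) ∉ Hker := by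
  intro n h
  have : chi (genA ^ (2*n+1)) = 1 := h
  rw [zpow_add, zpow_one, map_mul, chiA] at this
  have h2 : chi (genA ^ (2*n)) = 1 := memA2 n
  rw [h2, one_mul] at this
  exact absurd this (by decide)
lemma notmemA : genA ∉ Hker := by
  have := notmemA21 0
  simpa using this

/-- Let `φ : H → F` be the homomorphism with `φ(α²) = 1`, `φ(β) = α`,
`φ(α⁻¹βα) = β`, and `φ̄ : F → F` the extension with `φ̄(h) = φ(h)` for `h ∈ H`
and `φ̄(h) = α·φ(hα⁻¹)` otherwise.  Then `φ̄(βⁿ) = αⁿ`, `φ̄(α^(2n)) = 1` and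
`φ̄(α^(2n+1)) = α` for every `n ∈ ℤ`; consequently the third iterate of `φ̄` on
`βⁿ` lies in `{1, α}`, and `1` and `α` are fixed points of `φ̄`. -/
theorem phibar_attractor (φ : Hker →* FreeGroup Bool) (phibar : FreeGroup Bool → FreeGroup Bool)
    (hmA : genA ^ 2 ∈ Hker) (hmB : genB ∈ Hker) (hmC : genA⁻¹ * genB * genA ∈ Hker)
    (hφA : φ ⟨genA ^ 2, hmA⟩ = 1) (hφB : φ ⟨genB, hmB⟩ = genA)
    (hφC : φ ⟨genA⁻¹ * genB * genA, hmC⟩ = genB)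
    (hin : ∀ h (hh : h ∈ Hker), phibar h = φ ⟨h, hh⟩)
    (hout : ∀ h, h ∉ Hker → ∀ hm : h * genA⁻¹ ∈ Hker, phibar h = genA * φ ⟨h * genA⁻¹, hm⟩) :
    (∀ n : ℤ, phibar (genB ^ n) = genA ^ n) ∧
      (∀ n : ℤ, phibar (genA ^ (2 * n)) = 1) ∧
      (∀ n : ℤ, phibar (genA ^ (2 * n + 1)) = genA) ∧
      (∀ n : ℤ, phibar (phibar (phibar (genB ^ n))) ∈ ({1, genA} : Set (FreeGroup Bool))) ∧
      phibar 1 = 1 ∧ phibar genA = genA := by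
  have hB : ∀ n : ℤ, phibar (genB ^ n) = genA ^ n := by
    intro n
    rw [hin _ (memB n)]
    have : (⟨genB ^ n, memB n⟩ : Hker) = ⟨genB, hmB⟩ ^ n := by ext; simp
    rw [this, map_zpow, hφB]
  have hA2 : ∀ n : ℤ, phibar (genA ^ (2 * n)) = 1 := by
    intro n
    rw [hin _ (memA2 n)]
    have : (⟨genA ^ (2 * n), memA2 n⟩ : Hker) = ⟨genA ^ 2, hmA⟩ ^ n := by
      ext
      push_cast
      rw [← zpow_natCast genA 2, ← zpow_mul]; norm_num [mul_comm]
    rw [this, map_zpow, hφA, one_zpow]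
  have hA21 : ∀ n : ℤ, phibar (genA ^ (2 * n + 1)) = genA := by
    intro n
    have key : genA ^ (2 * n + 1) * genA⁻¹ = genA ^ (2 * n) := by
      rw [zpow_add, zpow_one, mul_assoc, mul_inv_cancel, mul_one]
    have hm : genA ^ (2 * n + 1) * genA⁻¹ ∈ Hker := key ▸ memA2 n
    rw [hout _ (notmemA21 n) hm]
    have : (⟨genA ^ (2 * n + 1) * genA⁻¹, hm⟩ : Hker) = ⟨genA ^ 2, hmA⟩ ^ n := by
      ext
      push_cast
      rw [key, ← zpow_natCast genA 2, ← zpow_mul]; norm_num [mul_comm]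
    rw [this, map_zpow, hφA, one_zpow, mul_one]
  have h1 : phibar 1 = 1 := by
    rw [hin 1 (one_mem _)]
    have : (⟨(1 : FreeGroup Bool), one_mem _⟩ : Hker) = 1 := rfl
    rw [this, map_one]
  have hA : phibar genA = genA := by
    have := hA21 0
    simpa using this
  refine ⟨hB, hA2, hA21, ?_, h1, hA⟩
  intro n
  rw [hB n]
  rcases Int.even_or_odd n with ⟨k, hk⟩ | ⟨k, hk⟩
  · have : n = 2 * k := by omega
    rw [this, hA2 k, h1]; left; rfl
  · rw [hk, hA21 k, hA]; right; rfl
end
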